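/- For η ∈ ℝ, define the 4×4 symmetric real matrix P(η) := [[0,0,0,0], [0, −3/2, (6−η)/4, (6−η)/4], [0, (6−η)/4, 0, 0], [0, (6−η)/4, 0, 0]]. Then for every η ∈ [0,3] and every vector z in the span of u = (1/2, 1/2, 1, 0)ᵀ and v = (1/2, 1/2, 0, 1)ᵀ, one has zᵀ P(η) z ≥ 0; explicitly, for z = α·u + β·v one has zᵀ P(η) z = (α+β)²·(9−2η)/8. -/

import Mathlib

open Matrix
noncomputable section

/-- The 4×4 perturbation matrix in the certificate proof for the pattern `(3-η, 3/2)`. -/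
def certP (η : ℝ) : Matrix (Fin 4) (Fin 4) ℝ :=
  !![0, 0, 0, 0;
     0, -3 / 2, (6 - η) / 4, (6 - η) / 4;
     0, (6 - η) / 4, 0, 0;
     0, (6 - η) / 4, 0, 0]

def uvec : Fin 4 → ℝ := ![1 / 2, 1 / 2, 1, 0]
def vvec : Fin 4 → ℝ := ![1 / 2, 1 / 2, 0, 1]

theorem dotProduct_certP_mulVec (η : ℝ) (z : Fin 4 → ℝ) :
    z ⬝ᵥ certP η *ᵥ z = -3 / 2 * z 1 ^ 2 + (6 - η) / 2 * z 1 * (z 2 + z 3) := by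
  simp only [dotProduct, mulVec, certP, of_apply, cons_val', cons_val_fin_one, Fin.sum_univ_four,
    cons_val_zero, cons_val_one, cons_val, zero_mul, add_zero, mul_zero, zero_add]
  ring

theorem smul_uvec_add_smul_vvec_apply_one (α β : ℝ) :
    (α • uvec + β • vvec) 1 = (α + β) / 2 := by
  simp only [uvec, vvec, Pi.add_apply, Pi.smul_apply, smul_eq_mul, cons_val_one, cons_val_zero]
  ring

theorem smul_uvec_add_smul_vvec_apply_two_add_three (α β : ℝ) :
    (α • uvec + β • vvec) 2 + (α • uvec + β • vvec) 3 = α + β := by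
  simp [uvec, vvec]

theorem dotProduct_certP_mulVec_span (η α β : ℝ) :
    (α • uvec + β • vvec) ⬝ᵥ certP η *ᵥ (α • uvec + β • vvec) =
      (α + β) ^ 2 * (9 - 2 * η) / 8 := by
  rw [dotProduct_certP_mulVec, smul_uvec_add_smul_vvec_apply_one,
    smul_uvec_add_smul_vvec_apply_two_add_three]
  ring

/-- On the span of `u` and `v`, the quadratic form of `P(η)` equals
`(α+β)²(9-2η)/8`, and in particular is nonnegative for `η ∈ [0,3]`. -/
theorem certP_nonneg_on_kernel :
    ∀ η : ℝ, 0 ≤ η → η ≤ 3 → ∀ α β : ℝ, ∀ z : Fin 4 → ℝ, z = α • uvec + β • vvec →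
      z ⬝ᵥ (certP η).mulVec z = (α + β) ^ 2 * (9 - 2 * η) / 8 ∧
      0 ≤ z ⬝ᵥ (certP η).mulVec z := by
  rintro η - hη α β z rfl
  have hform := dotProduct_certP_mulVec_span η α β
  refine ⟨hform, hform ▸ ?_⟩
  have : 0 ≤ 9 - 2 * η := by linarith
  positivity

end
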